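/- arXiv:1405.6467 — 3 statements merged into one kernel-verified Lean document; each statement's English description precedes it below -/
import Mathlib

section
/- Let Λ be the 2p×2p real block matrix Λ = [[-XL, Z], [-YL, 0]] where L, X, Y, Z are p×p real matrices with L symmetric positive definite, X + Xᵀ positive definite, Y symmetric and invertible, Y⁻¹Z symmetric positive semidefinite, and Z invertible. Then Λ is Hurwitz, i.e., every eigenvalue of Λ has negative real part. -/
open Matrix Complex

/-!
With `M = Y⁻¹Z`, the block-diagonal matrix `P = diag(L, M)` is a Lyapunov certificate:
the relations `YM = Z` and `MY = Zᵀ` make the off-diagonal blocks of `ΛᵀP + PΛ` cancel, leaving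
`ΛᵀP + PΛ = -diag(L(X + Xᵀ)L, 0)`. For an eigenvector `v = (a, b)` with eigenvalue `μ` this gives
`2 Re μ · Re(v*Pv) = -Re(a* L(X + Xᵀ)L a)`. Here `Re(v*Pv) ≥ 0`, while `a ≠ 0` (otherwise
`Zb = μa = 0` forces `b = 0`) and `L(X + Xᵀ)L` is positive definite, so the right side is negative.
-/

namespace Matrix

variable {n : Type*} [Fintype n]

theorem star_dotProduct_lyapunov_mulVec {R : Type*} [CommRing R] [StarRing R]
    (A P : Matrix n n R) {v : n → R} {μ : R} (hv : A *ᵥ v = μ • v) :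
    star v ⬝ᵥ (Aᴴ * P + P * A) *ᵥ v = (star μ + μ) * (star v ⬝ᵥ P *ᵥ v) := by
  rw [add_mulVec, ← mulVec_mulVec, ← mulVec_mulVec, hv, dotProduct_add, dotProduct_mulVec,
    ← star_mulVec, hv, mulVec_smul, star_smul, smul_dotProduct, dotProduct_smul, smul_eq_mul,
    smul_eq_mul, add_mul]

theorem re_star_dotProduct_map_ofReal_lyapunov_mulVec (A P : Matrix n n ℝ) {v : n → ℂ} {μ : ℂ}
    (hv : A.map ofReal *ᵥ v = μ • v) :
    (star v ⬝ᵥ (Aᵀ * P + P * A).map ofReal *ᵥ v).re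
      = 2 * μ.re * (star v ⬝ᵥ P.map ofReal *ᵥ v).re := by
  have hA : Aᵀ.map ofReal = (A.map ofReal)ᴴ := by
    rw [← conjTranspose_eq_transpose_of_trivial]
    exact conjTranspose_map _ fun x ↦ (conj_ofReal x).symm
  have hmul (B C : Matrix n n ℝ) : (B * C).map ofReal = B.map ofReal * C.map ofReal :=
    Matrix.map_mul (f := ofRealHom)
  rw [Matrix.map_add _ ofReal_add, hmul, hmul, hA, star_dotProduct_lyapunov_mulVec _ _ hv,
    star_def, add_comm, add_conj, mul_re]
  simp

theorem re_star_dotProduct_map_ofReal_mulVec (S : Matrix n n ℝ) (x : n → ℂ) :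
    (star x ⬝ᵥ S.map ofReal *ᵥ x).re
      = (fun i ↦ (x i).re) ⬝ᵥ S *ᵥ (fun i ↦ (x i).re)
        + (fun i ↦ (x i).im) ⬝ᵥ S *ᵥ (fun i ↦ (x i).im) := by
  simp only [dotProduct, mulVec, map_apply, Pi.star_apply, Finset.mul_sum, re_sum,
    ← Finset.sum_add_distrib]
  refine Finset.sum_congr rfl fun i _ ↦ Finset.sum_congr rfl fun j _ ↦ ?_
  simp only [mul_re, star_def, conj_re, conj_im, ofReal_re, ofReal_im, mul_im]
  ring

theorem PosSemidef.re_star_dotProduct_map_ofReal_mulVec_nonneg {S : Matrix n n ℝ}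
    (hS : S.PosSemidef) (x : n → ℂ) : 0 ≤ (star x ⬝ᵥ S.map ofReal *ᵥ x).re := by
  rw [re_star_dotProduct_map_ofReal_mulVec]
  exact add_nonneg (hS.dotProduct_mulVec_nonneg _) (hS.dotProduct_mulVec_nonneg _)

theorem PosDef.re_star_dotProduct_map_ofReal_mulVec_pos {S : Matrix n n ℝ}
    (hS : S.PosDef) {x : n → ℂ} (hx : x ≠ 0) : 0 < (star x ⬝ᵥ S.map ofReal *ᵥ x).re := by
  rw [re_star_dotProduct_map_ofReal_mulVec]
  have hre_or_im : (fun i ↦ (x i).re) ≠ 0 ∨ (fun i ↦ (x i).im) ≠ 0 := by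
    contrapose! hx
    exact funext fun i ↦ Complex.ext (congrFun hx.1 i) (congrFun hx.2 i)
  rcases hre_or_im with hre | him
  · exact add_pos_of_pos_of_nonneg (hS.dotProduct_mulVec_pos hre)
      (hS.posSemidef.dotProduct_mulVec_nonneg _)
  · exact add_pos_of_nonneg_of_pos (hS.posSemidef.dotProduct_mulVec_nonneg _)
      (hS.dotProduct_mulVec_pos him)

theorem star_dotProduct_fromBlocks_zero_zero_mulVec {m R : Type*} [Fintype m] [Semiring R]
    [Star R] (A : Matrix m m R) (D : Matrix n n R) (v : m ⊕ n → R) :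
    star v ⬝ᵥ fromBlocks A 0 0 D *ᵥ v
      = star (v ∘ Sum.inl) ⬝ᵥ A *ᵥ (v ∘ Sum.inl) + star (v ∘ Sum.inr) ⬝ᵥ D *ᵥ (v ∘ Sum.inr) := by
  rw [fromBlocks_mulVec, ← Sum.elim_comp_inl_inr (star v)]
  simp only [zero_mulVec, add_zero, zero_add, sumElim_dotProduct_sumElim]
  rfl

theorem fromBlocks_lyapunov_eq {R : Type*} [CommRing R] {L X Y Z M : Matrix n n R}
    (hL : L.IsSymm) (hY : Y.IsSymm) (hYM : Y * M = Z) (hMY : M * Y = Zᵀ) :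
    (fromBlocks (-(X * L)) Z (-(Y * L)) 0)ᵀ * fromBlocks L 0 0 M
        + fromBlocks L 0 0 M * fromBlocks (-(X * L)) Z (-(Y * L)) 0
      = -fromBlocks (L * (X + Xᵀ) * L) 0 0 0 := by
  simp only [fromBlocks_transpose, fromBlocks_multiply, fromBlocks_add, fromBlocks_neg,
    transpose_neg, transpose_mul, hL.eq, hY.eq, transpose_zero, mul_zero, zero_mul, add_zero,
    zero_add, neg_zero, mul_neg, neg_mul]
  congr 1
  · rw [mul_add, add_mul, Matrix.mul_assoc L X L]; abel
  · rw [Matrix.mul_assoc, hYM, neg_add_cancel]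
  · rw [← Matrix.mul_assoc, hMY, add_neg_cancel]

theorem comp_inl_ne_zero_of_fromBlocks_mulVec_eq_smul {m R : Type*} [Fintype m] [Semiring R]
    {A : Matrix m m R} {B : Matrix m n R} {C : Matrix n m R} (hB : Function.Injective B.mulVec)
    {v : m ⊕ n → R} {μ : R} (hv : v ≠ 0) (h : fromBlocks A B C 0 *ᵥ v = μ • v) :
    v ∘ Sum.inl ≠ 0 := by
  intro hinl
  have hBinr : B *ᵥ (v ∘ Sum.inr) = 0 := by
    simpa [fromBlocks_mulVec, Pi.smul_comp, hinl] using congrArg (· ∘ Sum.inl) h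
  have hinr : v ∘ Sum.inr = 0 := hB (by rw [hBinr, mulVec_zero])
  exact hv (by rw [← Sum.elim_comp_inl_inr v, hinl, hinr]; exact Sum.elim_zero_zero)

end Matrix

/-- If `L` is symmetric positive definite, `X + Xᵀ` is positive definite, `Y` is symmetric
and invertible, `Y⁻¹Z` is symmetric positive semidefinite, and `Z` is invertible, then the
block matrix `Λ = [[-XL, Z], [-YL, 0]]` is Hurwitz: every eigenvalue has negative real part. -/
theorem stmt1 (p : ℕ) (L X Y Z : Matrix (Fin p) (Fin p) ℝ)
    (hL : L.PosDef) (hX : (X + Xᵀ).PosDef)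
    (hY : Y.IsSymm) (hYinv : IsUnit Y)
    (hYZ : (Y⁻¹ * Z).PosSemidef) (hZ : IsUnit Z) :
    ∀ (lam : ℂ) (v : (Fin p ⊕ Fin p) → ℂ), v ≠ 0 →
      ((Matrix.fromBlocks (-(X * L)) Z (-(Y * L)) 0).map (Complex.ofReal)).mulVec v
        = lam • v → lam.re < 0 := by
  intro μ v hv heig
  set M := Y⁻¹ * Z
  have hLsymm : L.IsSymm := isHermitian_iff_isSymm.mp hL.isHermitian
  have hMsymm : M.IsSymm := isHermitian_iff_isSymm.mp hYZ.isHermitian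
  have hYdet : IsUnit Y.det := (isUnit_iff_isUnit_det Y).mp hYinv
  have hYM : Y * M = Z := mul_nonsing_inv_cancel_left Y Z hYdet
  have hMY : M * Y = Zᵀ := calc
    M * Y = Mᵀ * Y := by rw [hMsymm.eq]
    _ = Zᵀ * (Y⁻¹ᵀ * Y) := by rw [transpose_mul, Matrix.mul_assoc]
    _ = Zᵀ := by rw [transpose_nonsing_inv, hY.eq, nonsing_inv_mul _ hYdet, Matrix.mul_one]
  have hS : (L * (X + Xᵀ) * L).PosDef := by
    simpa [hLsymm.eq] using
      hX.conjTranspose_mul_mul_same (mulVec_injective_iff_isUnit.mpr hL.isUnit)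
  have hinl : v ∘ Sum.inl ≠ 0 := by
    rw [fromBlocks_map] at heig
    exact comp_inl_ne_zero_of_fromBlocks_mulVec_eq_smul
      (mulVec_injective_iff_isUnit.mpr (hZ.map (ofRealHom.mapMatrix (m := Fin p)))) hv heig
  set a := v ∘ Sum.inl
  set b := v ∘ Sum.inr
  have hform : -(star a ⬝ᵥ (L * (X + Xᵀ) * L).map ofReal *ᵥ a).re
      = 2 * μ.re * ((star a ⬝ᵥ L.map ofReal *ᵥ a).re + (star b ⬝ᵥ M.map ofReal *ᵥ b).re) := by
    simpa only [fromBlocks_lyapunov_eq hLsymm hY hYM hMY, Matrix.map_neg _ ofReal_neg,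
      fromBlocks_map, Matrix.map_zero _ ofReal_zero, neg_mulVec, dotProduct_neg, neg_re,
      star_dotProduct_fromBlocks_zero_zero_mulVec, zero_mulVec, dotProduct_zero, add_zero,
      add_re] using re_star_dotProduct_map_ofReal_lyapunov_mulVec _ (fromBlocks L 0 0 M) heig
  have hSa := hS.re_star_dotProduct_map_ofReal_mulVec_pos hinl
  have hLa := hL.posSemidef.re_star_dotProduct_map_ofReal_mulVec_nonneg a
  have hMb := hYZ.re_star_dotProduct_map_ofReal_mulVec_nonneg b
  nlinarith
end

section
/- Let Λ be the 2p×2p real block matrix Λ = [[0, Z], [-YL₁, -YL₂Z]] where L₁, L₂, Y, Z are p×p real matrices with L₁ symmetric and invertible, L₂ symmetric positive definite, Y symmetric and invertible, and Y⁻¹Z symmetric positive definite. Then Λ has no eigenvalues on the imaginary axis. -/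
/-!
Write `Z = Y S` with `S = Y⁻¹ Z` and let `Λ (x, y) = μ (x, y)` with `star μ = -μ`. The second
block row reads `Y w = μ y` with `w = -(L₁ x + μ L₂ x)`; pairing it with `S y` and using
`Y S y = μ x` gives the energy balance `μ (x⋆L₁x + μ x⋆L₂x) = μ y⋆Sy`. For `μ ≠ 0` all three
quadratic forms are real, so comparing the balance with its conjugate forces `x⋆L₂x = 0`, hence
`x = 0` and then `y = 0`. For `μ = 0` invertibility of `Y S` and `Y L₁` kills `y` and then `x`.
The real statement follows by complexification.
-/

open Matrix Complex
open scoped ComplexOrder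

namespace Matrix

variable {n : Type*} [Fintype n]

theorem star_mulVec_dotProduct {R : Type*} [CommSemiring R] [StarRing R] (A : Matrix n n R)
    (v w : n → R) : star (A *ᵥ v) ⬝ᵥ w = star v ⬝ᵥ Aᴴ *ᵥ w := by
  rw [star_mulVec, dotProduct_mulVec]

theorem IsHermitian.isSelfAdjoint_star_dotProduct_mulVec {R : Type*} [CommSemiring R]
    [StarRing R] {A : Matrix n n R} (hA : A.IsHermitian) (x : n → R) :
    IsSelfAdjoint (star x ⬝ᵥ A *ᵥ x) := by
  rw [IsSelfAdjoint, ← star_dotProduct, star_mulVec_dotProduct, hA.eq]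

theorem eq_zero_of_isUnit_of_mulVec_eq_zero {R : Type*} [CommRing R] [DecidableEq n]
    {A : Matrix n n R} (hA : IsUnit A) {v : n → R} (hv : A *ᵥ v = 0) : v = 0 :=
  mulVec_injective_of_isUnit hA (hv.trans (mulVec_zero A).symm)

omit [Fintype n] in
theorem IsSymm.isHermitian_map_ofReal {M : Matrix n n ℝ} (hM : M.IsSymm) :
    (M.map ofReal).IsHermitian :=
  (isHermitian_iff_isSymm.mpr hM).map _ fun r => by simp

theorem map_ofReal_mul (M N : Matrix n n ℝ) :
    (M * N).map ofReal = M.map ofReal * N.map ofReal :=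
  Matrix.map_mul (f := ofRealHom)

theorem IsUnit.map_ofReal [DecidableEq n] {M : Matrix n n ℝ} (hM : IsUnit M) :
    IsUnit (M.map ofReal) :=
  hM.map ofRealHom.mapMatrix

open scoped MatrixOrder in
theorem PosDef.map_ofReal [DecidableEq n] {M : Matrix n n ℝ} (hM : M.PosDef) :
    (M.map ofReal).PosDef := by
  refine (PosSemidef.posDef_iff_isUnit ?_).mpr hM.isUnit.map_ofReal
  obtain ⟨B, rfl⟩ := CStarAlgebra.nonneg_iff_eq_star_mul_self.mp hM.posSemidef.nonneg
  rw [star_eq_conjTranspose, map_ofReal_mul, conjTranspose_map _ fun r => by simp]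
  exact posSemidef_conjTranspose_mul_self _

end Matrix

section BlockEigen

variable {n 𝕜 : Type*} [Fintype n] [RCLike 𝕜]

theorem mul_eq_zero_of_add_mul_eq {a b s μ : 𝕜} (ha : IsSelfAdjoint a) (hb : IsSelfAdjoint b)
    (hs : IsSelfAdjoint s) (hμ : star μ = -μ) (h : a + μ * b = s) : μ * b = 0 := by
  have h' := congrArg star h
  rw [star_add, star_mul, ha.star_eq, hb.star_eq, hs.star_eq, hμ] at h'
  linear_combination (h - h') / 2

theorem energy_balance_of_block_eigen {L₁ L₂ Y S : Matrix n n 𝕜} (hY : Y.IsHermitian)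
    (hS : S.IsHermitian) {μ : 𝕜} (hμ : star μ = -μ) {x y : n → 𝕜} (h₁ : (Y * S) *ᵥ y = μ • x)
    (h₂ : Y *ᵥ -(L₁ *ᵥ x + μ • L₂ *ᵥ x) = μ • y) :
    μ * (star x ⬝ᵥ L₁ *ᵥ x + μ * (star x ⬝ᵥ L₂ *ᵥ x)) = μ * (star y ⬝ᵥ S *ᵥ y) :=
  calc μ * (star x ⬝ᵥ L₁ *ᵥ x + μ * (star x ⬝ᵥ L₂ *ᵥ x))
      = star μ * (star x ⬝ᵥ -(L₁ *ᵥ x + μ • L₂ *ᵥ x)) := by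
        rw [hμ, dotProduct_neg, dotProduct_add, dotProduct_smul, smul_eq_mul]; ring
    _ = star ((Y * S) *ᵥ y) ⬝ᵥ -(L₁ *ᵥ x + μ • L₂ *ᵥ x) := by
        rw [h₁, star_smul, smul_dotProduct, smul_eq_mul]
    _ = star (S *ᵥ y) ⬝ᵥ μ • y := by
        rw [← mulVec_mulVec, star_mulVec_dotProduct, hY.eq, h₂]
    _ = μ * (star y ⬝ᵥ S *ᵥ y) := by
        rw [dotProduct_smul, star_mulVec_dotProduct, hS.eq, smul_eq_mul]

theorem eq_zero_of_fromBlocks_mulVec_eq_smul [DecidableEq n] {L₁ L₂ Y S : Matrix n n 𝕜}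
    (hL₁ : L₁.IsHermitian) (hL₁u : IsUnit L₁) (hL₂ : L₂.PosDef) (hY : Y.IsHermitian)
    (hYu : IsUnit Y) (hS : S.PosDef) {μ : 𝕜} (hμ : star μ = -μ) {v : n ⊕ n → 𝕜}
    (hv : fromBlocks 0 (Y * S) (-(Y * L₁)) (-(Y * (L₂ * (Y * S)))) *ᵥ v = μ • v) : v = 0 := by
  obtain ⟨x, y, rfl⟩ : ∃ x y, v = Sum.elim x y := ⟨_, _, (Sum.elim_comp_inl_inr v).symm⟩
  have hsplit : μ • Sum.elim x y = Sum.elim (μ • x) (μ • y) := by ext (i | i) <;> rfl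
  simp only [fromBlocks_mulVec, Sum.elim_comp_inl, Sum.elim_comp_inr, zero_mulVec, zero_add,
    hsplit, Sum.elim_eq_iff] at hv
  obtain ⟨h₁, h₂⟩ := hv
  have h₂' : Y *ᵥ -(L₁ *ᵥ x + μ • L₂ *ᵥ x) = μ • y := by
    rw [← h₂, ← mulVec_smul, ← h₁]
    simp only [neg_mulVec, ← mulVec_mulVec, mulVec_neg, mulVec_add, neg_add]
  rw [← Sum.elim_zero_zero, Sum.elim_eq_iff]
  rcases eq_or_ne μ 0 with rfl | hμ0
  · obtain rfl : y = 0 :=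
      eq_zero_of_isUnit_of_mulVec_eq_zero (hYu.mul hS.isUnit) (by simpa using h₁)
    exact ⟨eq_zero_of_isUnit_of_mulVec_eq_zero (hYu.mul hL₁u) (by simpa [neg_mulVec] using h₂),
      rfl⟩
  · have hbal :=
      mul_left_cancel₀ hμ0 (energy_balance_of_block_eigen hY hS.isHermitian hμ h₁ h₂')
    have hb : star x ⬝ᵥ L₂ *ᵥ x = 0 :=
      (mul_eq_zero.mp (mul_eq_zero_of_add_mul_eq
        (hL₁.isSelfAdjoint_star_dotProduct_mulVec x)
        (hL₂.isHermitian.isSelfAdjoint_star_dotProduct_mulVec x)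
        (hS.isHermitian.isSelfAdjoint_star_dotProduct_mulVec y) hμ hbal)).resolve_left hμ0
    obtain rfl : x = 0 := by
      by_contra hx
      exact (hL₂.dotProduct_mulVec_pos hx).ne' hb
    simpa [hμ0] using h₂'.symm

end BlockEigen

/-- If `L₁` is symmetric invertible, `L₂` symmetric positive definite, `Y` symmetric invertible,
and `Y⁻¹Z` symmetric positive definite, then `Λ = [[0, Z], [-YL₁, -YL₂Z]]` has no eigenvalues
on the imaginary axis. -/
theorem stmt3 (p : ℕ) (L₁ L₂ Y Z : Matrix (Fin p) (Fin p) ℝ)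
    (hL₁ : L₁.IsSymm) (hL₁inv : IsUnit L₁)
    (hL₂ : L₂.PosDef)
    (hY : Y.IsSymm) (hYinv : IsUnit Y)
    (hYZ : (Y⁻¹ * Z).PosDef) :
    ¬ ∃ (lam : ℝ) (v : (Fin p ⊕ Fin p) → ℂ), v ≠ 0 ∧
      ((Matrix.fromBlocks 0 Z (-(Y * L₁)) (-(Y * (L₂ * Z)))).map
          (Complex.ofReal)).mulVec v = (Complex.I * lam) • v := by
  rintro ⟨lam, v, hv0, hv⟩
  obtain ⟨S, hS, rfl⟩ : ∃ S : Matrix (Fin p) (Fin p) ℝ, S.PosDef ∧ Z = Y * S :=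
    ⟨Y⁻¹ * Z, hYZ,
      (mul_nonsing_inv_cancel_left Y Z ((isUnit_iff_isUnit_det Y).mp hYinv)).symm⟩
  simp only [fromBlocks_map, map_ofReal_mul, Matrix.map_zero, Matrix.map_neg, ofReal_neg,
    implies_true, ofReal_zero] at hv
  exact hv0 (eq_zero_of_fromBlocks_mulVec_eq_smul hL₁.isHermitian_map_ofReal hL₁inv.map_ofReal
    hL₂.map_ofReal hY.isHermitian_map_ofReal hYinv.map_ofReal hS.map_ofReal (by simp) hv)
end

section
/- Let L₁, L₂, Y, Z be p×p real matrices with L₁ symmetric and invertible, L₂ symmetric positive definite, Y symmetric and invertible, and Y⁻¹Z symmetric positive definite. Let Λ = [[0, Z], [-YL₁, -YL₂Z]] and H = [[-L₁⁻¹, 0], [0, -Z⁻¹Y]]. Then H is symmetric and invertible, and ΛH + HΛᵀ = [[0,0],[0, 2YL₂Y]], which is positive semidefinite. -/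
/-!
Because `H` is symmetric, `HΛᵀ = (ΛH)ᵀ`, and a direct block computation gives
`ΛH = [[0, -Y], [Y, YL₂Y]]`: the off-diagonal blocks are skew and cancel in `ΛH + (ΛH)ᵀ`,
leaving only the congruence `2 Y L₂ Yᵀ` of the positive definite `L₂`.
-/

open Matrix

namespace Matrix

variable {m n R : Type*} [Fintype m] [Fintype n] [DecidableEq n]
  [CommRing R] [PartialOrder R] [StarRing R]

theorem PosSemidef.fromBlocks_zero_zero_zero {D : Matrix n n R} (hD : D.PosSemidef) :
    (fromBlocks (0 : Matrix m m R) 0 0 D).PosSemidef := by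
  convert hD.conjTranspose_mul_mul_same (fromCols (0 : Matrix n m R) (1 : Matrix n n R)) using 1
  rw [conjTranspose_fromCols_eq_fromRows_conjTranspose, Matrix.mul_assoc, mul_fromCols,
    fromRows_mul_fromCols]
  simp

end Matrix

/-- With `L₁` symmetric invertible, `L₂` symmetric positive definite, `Y` symmetric invertible,
`Y⁻¹Z` symmetric positive definite, `Λ = [[0, Z], [-YL₁, -YL₂Z]]` and
`H = [[-L₁⁻¹, 0], [0, -Z⁻¹Y]]`, the matrix `H` is symmetric and invertible and
`ΛH + HΛᵀ = [[0,0],[0,2YL₂Y]]`, which is positive semidefinite. -/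
theorem stmt4 (p : ℕ) (L₁ L₂ Y Z : Matrix (Fin p) (Fin p) ℝ)
    (hL₁ : L₁.IsSymm) (hL₁inv : IsUnit L₁)
    (hL₂ : L₂.PosDef)
    (hY : Y.IsSymm) (hYinv : IsUnit Y)
    (hYZ : (Y⁻¹ * Z).PosDef) :
    let Λ : Matrix (Fin p ⊕ Fin p) (Fin p ⊕ Fin p) ℝ :=
      Matrix.fromBlocks 0 Z (-(Y * L₁)) (-(Y * (L₂ * Z)))
    let H : Matrix (Fin p ⊕ Fin p) (Fin p ⊕ Fin p) ℝ :=
      Matrix.fromBlocks (-(L₁⁻¹)) 0 0 (-(Z⁻¹ * Y))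
    H.IsSymm ∧ IsUnit H ∧
      Λ * H + H * Λᵀ = Matrix.fromBlocks 0 0 0 ((2 : ℝ) • (Y * L₂ * Y)) ∧
      (Λ * H + H * Λᵀ).PosSemidef := by
  intro Λ H
  have hYdet := (isUnit_iff_isUnit_det Y).mp hYinv
  have hZ : IsUnit Z := by
    simpa [← Matrix.mul_assoc, mul_nonsing_inv _ hYdet] using hYinv.mul hYZ.isUnit
  have hZY : (Z⁻¹ * Y).PosDef := by
    simpa [Matrix.mul_inv_rev, nonsing_inv_nonsing_inv _ hYdet] using hYZ.inv
  have hH : H.IsSymm :=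
    .fromBlocks hL₁.inv.neg (by simp) (isHermitian_iff_isSymm.mp hZY.isHermitian).neg
  have hΛH : Λ * H = fromBlocks 0 (-Y) Y (Y * L₂ * Y) := by
    have hL₁L₁ := mul_nonsing_inv L₁ ((isUnit_iff_isUnit_det L₁).mp hL₁inv)
    have hZZ := mul_nonsing_inv Z ((isUnit_iff_isUnit_det Z).mp hZ)
    simp [Λ, H, fromBlocks_multiply, Matrix.mul_assoc, hL₁L₁, ← Matrix.mul_assoc Z, hZZ]
  have hYL₂Y : (Y * L₂ * Y).PosSemidef := by
    simpa [hY.eq] using hL₂.posSemidef.mul_mul_conjTranspose_same Y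
  have hsum : Λ * H + H * Λᵀ = fromBlocks 0 0 0 ((2 : ℝ) • (Y * L₂ * Y)) := by
    rw [show H * Λᵀ = (Λ * H)ᵀ by rw [transpose_mul, hH.eq], hΛH, fromBlocks_transpose,
      fromBlocks_add]
    simp [hY.eq, (isHermitian_iff_isSymm.mp hYL₂Y.isHermitian).eq, two_smul]
  have hHinv : IsUnit H :=
    isUnit_fromBlocks_zero₁₂.mpr ⟨(isUnit_nonsing_inv_iff.mpr hL₁inv).neg, hZY.isUnit.neg⟩
  exact ⟨hH, hHinv, hsum, hsum ▸ .fromBlocks_zero_zero_zero (hYL₂Y.smul zero_le_two)⟩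
end
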